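/- For the locally constant cocycle over the full 2-shift with f̃₀(p₁,p₂) = (p₁ + sin(2πp₂), p₂) and f̃₁(p₁,p₂) = (p₁, p₂ + √2): the rotation set of the Dirac measure at the constant-0 sequence is [−1,1] × {0}, while for each k the rotation set of the invariant measure supported on the period-k orbit of the word 0^{k−1}1 is the singleton {(0, √2/k)}. In particular the map μ ↦ ρ_μ(F̃) is not continuous for the weak-* topology. -/

import Mathlib

open Filter MeasureTheory Topology Set

noncomputable section

instance : Fact ((0:ℝ) < 1) := ⟨one_pos⟩

/-- The two-torus `ℝ²/ℤ²`. -/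
abbrev T2 := AddCircle (1:ℝ) × AddCircle (1:ℝ)

/-- The covering projection `π : ℝ² → 𝕋²`. -/
def pr : ℝ × ℝ → T2 := fun p => (↑p.1, ↑p.2)

/-- An integer vector viewed inside `ℝ²`. -/
def intVec (v : ℤ × ℤ) : ℝ × ℝ := ((v.1 : ℝ), (v.2 : ℝ))

variable {Sg : Type*}

/-- The cocycle map `F(x,p) = (σ(x), fₓ(p))` on `M = Σ × 𝕋²`. -/
def coc (σ : Sg → Sg) (f : Sg → T2 → T2) : Sg × T2 → Sg × T2 :=
  fun q => (σ q.1, f q.1 q.2)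

/-- Time-`n` averaged displacement `ρₙ = (1/n) Σ_{i<n} ρ₁ ∘ Fⁱ`. -/
def rhoN (Fm : Sg × T2 → Sg × T2) (ρ1 : Sg × T2 → ℝ × ℝ) (n : ℕ) (q : Sg × T2) :
    ℝ × ℝ :=
  (n : ℝ)⁻¹ • ∑ i ∈ Finset.range n, ρ1 (Fm^[i] q)

/-- The pointwise rotation set `ρ_point`: all accumulation points of the
sequences `(ρₙ(x,p))ₙ`, over all points `(x,p) ∈ M`. -/
def rhoPointSet (Fm : Sg × T2 → Sg × T2) (ρ1 : Sg × T2 → ℝ × ℝ) : Set (ℝ × ℝ) :=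
  {v | ∃ q : Sg × T2, MapClusterPt v atTop fun n => rhoN Fm ρ1 n q}

/-- The Misiurewicz–Ziemian rotation set `ρ_mz = ⋂_N closure (⋃_{n ≥ N} Dₙ)`. -/
def rhoMZ (Fm : Sg × T2 → Sg × T2) (ρ1 : Sg × T2 → ℝ × ℝ) : Set (ℝ × ℝ) :=
  ⋂ N : ℕ, closure (⋃ n ∈ {n : ℕ | N ≤ n}, Set.range (rhoN Fm ρ1 n))

/-- The measure rotation set `ρ_mes = {∫ ρ₁ dm : m F-invariant probability}`. -/
def rhoMes [MeasurableSpace Sg] (Fm : Sg × T2 → Sg × T2) (ρ1 : Sg × T2 → ℝ × ℝ) :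
    Set (ℝ × ℝ) :=
  {v | ∃ m : Measure (Sg × T2), IsProbabilityMeasure m ∧ m.map Fm = m ∧
    (∫ q, ρ1 q ∂m) = v}

/-- The rotation set `ρ_μ(F̃)` of a base measure `μ`: rotation vectors of
`F`-invariant probability measures on `M` projecting to `μ`. -/
def rhoMuSet [MeasurableSpace Sg] (Fm : Sg × T2 → Sg × T2)
    (ρ1 : Sg × T2 → ℝ × ℝ) (μ : Measure Sg) : Set (ℝ × ℝ) :=
  {w | ∃ m : Measure (Sg × T2), IsProbabilityMeasure m ∧ m.map Fm = m ∧
    m.map Prod.fst = μ ∧ (∫ q, ρ1 q ∂m) = w}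

/-- The full shift on `{0,1}^ℤ`. -/
def shift : (ℤ → Fin 2) → (ℤ → Fin 2) := fun x i => x (i + 1)

/-- The lift `f̃₀(p₁,p₂) = (p₁ + sin(2πp₂), p₂)`. -/
def ft0 : ℝ × ℝ → ℝ × ℝ := fun p => (p.1 + Real.sin (2 * Real.pi * p.2), p.2)

/-- The lift `f̃₁(p₁,p₂) = (p₁, p₂ + √2)`. -/
def ft1 : ℝ × ℝ → ℝ × ℝ := fun p => (p.1, p.2 + Real.sqrt 2)

/-- Selection of the two lifts. -/
def ftsel : Fin 2 → ℝ × ℝ → ℝ × ℝ := fun i => if i = 0 then ft0 else ft1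

/-- The `k`-periodic word `0⋯01` (symbol `1` exactly at positions `≡ k−1 mod k`). -/
def perWord (k : ℕ) : ℤ → Fin 2 := fun i => if i % (k : ℤ) = (k : ℤ) - 1 then 1 else 0

/-!
The hypotheses pin down `f` and `ρ₁`: `f₀(a, b) = (a + sin 2πb, b)`, `f₁(a, b) = (a, b + √2)`, and
`ρ₁(x, p)` is `(sin 2πp₂, 0)` or `(0, √2)` according to `x₀`. The second coordinate of `ρ₁` only
depends on `x`, so its integral is read off from the base measure.

Over `δ_{0^∞}` the first coordinate is a sine, so its integral lies in `[-1, 1]`; conversely each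
`v ∈ [-1, 1] × {0}` is the rotation vector of the invariant measure `δ_{0^∞} ⊗ Leb ⊗ δ_t` with
`sin 2πt = v₁`.

Over the orbit of the `k`-periodic word, `F^k` fixes the base point and rotates the second circle
coordinate by `√2`. Hence `[x₀ = 0] e^{2πi p₂}` is an eigenfunction of the `m`-preserving map `F^k`
with eigenvalue `e^{2πi√2} ≠ 1`, so its integral vanishes; the first coordinate of the rotation
vector is the imaginary part of that integral. The product of the orbit measure with Lebesgue
measure is invariant, so the rotation set is not empty.
-/

open Function Real

instance : IsProbabilityMeasure (volume : Measure (AddCircle (1:ℝ))) :=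
  ⟨by simp [AddCircle.measure_univ]⟩

section PeriodicOrbit

variable {α M : Type*} {f : α → α} {n : ℕ} {x : α}

theorem Function.IsPeriodicPt.birkhoffSum_apply [AddCommMonoid M] (hx : IsPeriodicPt f n x)
    (g : α → M) : birkhoffSum f g n (f x) = birkhoffSum f g n x := by
  cases n with
  | zero => simp
  | succ n => rw [birkhoffSum_succ, ← iterate_succ_apply, hx.isFixedPt.eq, add_comm,
      ← birkhoffSum_succ']

theorem Function.IsPeriodicPt.birkhoffSum_iterate_apply [AddCommMonoid M]
    (hx : IsPeriodicPt f n x) (g : α → M) (i : ℕ) :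
    birkhoffSum f g n (f^[i] x) = birkhoffSum f g n x := by
  induction i with
  | zero => rfl
  | succ i ih => rw [iterate_succ_apply', (hx.apply_iterate i).birkhoffSum_apply, ih]

variable [MeasurableSpace α]

def orbitMeasure (f : α → α) (n : ℕ) (x : α) : Measure α :=
  (n : ENNReal)⁻¹ • birkhoffSum f Measure.dirac n x

theorem isProbabilityMeasure_orbitMeasure (hn : n ≠ 0) :
    IsProbabilityMeasure (orbitMeasure f n x) := by
  constructor
  simp [orbitMeasure, birkhoffSum, ENNReal.inv_mul_cancel, hn]

variable [MeasurableSingletonClass α]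

theorem map_orbitMeasure (hf : Measurable f) (hx : IsPeriodicPt f n x) :
    (orbitMeasure f n x).map f = orbitMeasure f n x := by
  conv_rhs => rw [orbitMeasure, ← hx.birkhoffSum_apply]
  rw [orbitMeasure, Measure.map_smul, birkhoffSum, Measure.map_finset_sum hf.aemeasurable]
  simp only [Measure.map_dirac, ← iterate_succ_apply', iterate_succ_apply, birkhoffSum]

theorem integral_orbitMeasure {E : Type*} [NormedAddCommGroup E] [NormedSpace ℝ E]
    [CompleteSpace E] (g : α → E) :
    ∫ y, g y ∂orbitMeasure f n x = (n : ℝ)⁻¹ • birkhoffSum f g n x := by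
  rw [orbitMeasure, integral_smul_measure, birkhoffSum,
    integral_finsetSum_measure fun i _ => integrable_dirac enorm_lt_top]
  simp [birkhoffSum]

theorem ae_orbitMeasure {p : α → Prop} (h : ∀ i, p (f^[i] x)) :
    ∀ᵐ y ∂orbitMeasure f n x, p y := by
  rw [ae_iff, orbitMeasure, Measure.smul_apply, birkhoffSum, Measure.finsetSum_apply]
  simp [Measure.dirac_apply, h]

end PeriodicOrbit

theorem MeasureTheory.MeasurePreserving.integral_eq_zero_of_comp_ae_eq_smul {α E 𝕜 : Type*}
    [MeasurableSpace α] {μ : Measure α} [NormedAddCommGroup E] [NormedSpace ℝ E] [NormedField 𝕜]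
    [Module 𝕜 E] [NormSMulClass 𝕜 E] [SMulCommClass ℝ 𝕜 E] {T : α → α}
    (hT : MeasurePreserving T μ μ) {Ψ : α → E} (hΨ : AEStronglyMeasurable Ψ μ) {c : 𝕜}
    (hc : c ≠ 1) (h : Ψ ∘ T =ᵐ[μ] c • Ψ) : ∫ a, Ψ a ∂μ = 0 := by
  have hcomp : ∫ a, Ψ (T a) ∂μ = ∫ a, Ψ a ∂μ := by
    rw [← integral_map hT.aemeasurable (hT.map_eq.symm ▸ hΨ), hT.map_eq]
  have hfix : c • ∫ a, Ψ a ∂μ = ∫ a, Ψ a ∂μ := by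
    rw [← integral_smul, ← hcomp]
    exact integral_congr_ae h.symm
  have h1 : (c - 1) • ∫ a, Ψ a ∂μ = 0 := by rw [sub_smul, one_smul, hfix, sub_self]
  exact (smul_eq_zero.mp h1).resolve_left (sub_ne_zero.mpr hc)

theorem coc_iterate_fst (σ : Sg → Sg) (g : Sg → T2 → T2) (n : ℕ) (q : Sg × T2) :
    ((coc σ g)^[n] q).1 = σ^[n] q.1 :=
  Semiconj.iterate_right (f := Prod.fst) (fun _ => rfl) n q

theorem coc_iterate_snd_snd {σ : Sg → Sg} {g : Sg → T2 → T2} {φ : Sg → ℝ}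
    (hg : ∀ x p, (g x p).2 = p.2 + φ x) (n : ℕ) (q : Sg × T2) :
    ((coc σ g)^[n] q).2.2 = q.2.2 + (birkhoffSum σ φ n q.1 : ℝ) := by
  induction n with
  | zero => simp
  | succ n ih =>
    rw [iterate_succ_apply', coc, hg, ih, coc_iterate_fst, birkhoffSum_succ, AddCircle.coe_add,
      add_assoc]

def sinCircle (b : AddCircle (1:ℝ)) : ℝ := (AddCircle.toCircle b : ℂ).im

theorem sinCircle_coe (r : ℝ) : sinCircle r = Real.sin (2 * π * r) := by
  rw [sinCircle, AddCircle.toCircle_apply_mk, Circle.coe_exp, div_one]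
  exact_mod_cast Complex.exp_ofReal_mul_I_im (2 * π * r)

@[fun_prop]
theorem continuous_sinCircle : Continuous sinCircle :=
  Complex.continuous_im.comp (continuous_subtype_val.comp AddCircle.continuous_toCircle)

theorem abs_sinCircle_le_one (b : AddCircle (1:ℝ)) : |sinCircle b| ≤ 1 :=
  (Complex.abs_im_le_norm _).trans (Circle.norm_coe _).le

theorem toCircle_sqrt_two_ne_one :
    (AddCircle.toCircle ((√2 : ℝ) : AddCircle (1:ℝ)) : ℂ) ≠ 1 := by
  intro h
  have h0 : ((√2 : ℝ) : AddCircle (1:ℝ)) = 0 :=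
    AddCircle.injective_toCircle one_ne_zero (by ext; simpa using h)
  obtain ⟨n, hn⟩ := (AddCircle.coe_eq_zero_iff 1).mp h0
  exact irrational_sqrt_two.ne_int n (by simpa using hn.symm)

def fiberMap (i : Fin 2) (q : T2) : T2 :=
  if i = 0 then (q.1 + (sinCircle q.2 : ℝ), q.2) else (q.1, q.2 + (√2 : ℝ))

def vertDisp (x : ℤ → Fin 2) : ℝ := if x 0 = 0 then 0 else √2

def horDisp (q : (ℤ → Fin 2) × T2) : ℝ := if q.1 0 = 0 then sinCircle q.2.2 else 0

def disp (q : (ℤ → Fin 2) × T2) : ℝ × ℝ := (horDisp q, vertDisp q.1)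

theorem abs_horDisp_le_one (q : (ℤ → Fin 2) × T2) : |horDisp q| ≤ 1 := by
  by_cases h : q.1 0 = 0 <;> simp [horDisp, h, abs_sinCircle_le_one]

local notation "𝐅" => coc shift fun x => fiberMap (x 0)

theorem pr_surjective : Surjective pr := fun q => by
  obtain ⟨a, ha⟩ := QuotientAddGroup.mk_surjective q.1
  obtain ⟨b, hb⟩ := QuotientAddGroup.mk_surjective q.2
  exact ⟨(a, b), Prod.ext ha hb⟩

theorem eq_fiberMap_of_lift {f : Fin 2 → T2 → T2} (hlift : ∀ i p, pr (ftsel i p) = f i (pr p)) :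
    f = fiberMap := by
  funext i q
  obtain ⟨p, rfl⟩ := pr_surjective q
  rw [← hlift]
  fin_cases i <;> simp [ftsel, ft0, ft1, fiberMap, pr, sinCircle_coe]

theorem eq_disp_of_lift {ρ1 : (ℤ → Fin 2) × T2 → ℝ × ℝ}
    (hρ : ∀ x p, ρ1 (x, pr p) = ftsel (x 0) p - p) : ρ1 = disp := by
  funext ⟨x, q⟩
  obtain ⟨p, rfl⟩ := pr_surjective q
  rw [hρ]
  by_cases hx : x 0 = 0 <;> simp [hx, ftsel, ft0, ft1, disp, horDisp, vertDisp, pr, sinCircle_coe,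
    Prod.ext_iff]

theorem fiberMap_snd (x : ℤ → Fin 2) (q : T2) : (fiberMap (x 0) q).2 = q.2 + (vertDisp x : ℝ) := by
  by_cases hx : x 0 = 0 <;> simp [fiberMap, vertDisp, hx]

theorem measurableSet_symbol_eq_zero : MeasurableSet {x : ℤ → Fin 2 | x 0 = 0} :=
  measurable_pi_apply 0 (measurableSet_singleton 0)

theorem measurable_shift : Measurable shift :=
  measurable_pi_lambda _ fun i => measurable_pi_apply (i + 1)

theorem measurable_fiberMap : Measurable (uncurry fun x : ℤ → Fin 2 => fiberMap (x 0)) := by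
  refine Measurable.ite (measurable_fst measurableSet_symbol_eq_zero) ?_ ?_ <;>
  · apply Continuous.measurable
    fun_prop

theorem measurable_coc_fiberMap : Measurable 𝐅 :=
  (measurable_shift.comp measurable_fst).prodMk measurable_fiberMap

theorem measurable_horDisp : Measurable horDisp :=
  Measurable.ite (measurable_fst measurableSet_symbol_eq_zero)
    (continuous_sinCircle.measurable.comp (measurable_snd.comp measurable_snd)) measurable_const

theorem measurable_vertDisp : Measurable vertDisp :=
  Measurable.ite measurableSet_symbol_eq_zero measurable_const measurable_const

theorem measurePreserving_fiberMap_zero (ν : Measure (AddCircle (1:ℝ))) [SFinite ν] :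
    MeasurePreserving (fiberMap 0) (volume.prod ν) (volume.prod ν) := by
  have hskew : MeasurePreserving (fun q : AddCircle (1:ℝ) × AddCircle (1:ℝ) =>
      (q.1, q.2 + (sinCircle q.1 : ℝ))) (ν.prod volume) (ν.prod volume) :=
    (MeasurePreserving.id ν).skew_product
      (g := fun b (a : AddCircle (1:ℝ)) => a + (sinCircle b : ℝ))
      (Continuous.measurable (by fun_prop))
      (ae_of_all _ fun b => (measurePreserving_add_right volume _).map_eq)
  exact Measure.measurePreserving_swap.comp (hskew.comp Measure.measurePreserving_swap)

theorem measurePreserving_fiberMap (i : Fin 2) : MeasurePreserving (fiberMap i) volume volume := by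
  fin_cases i
  · exact measurePreserving_fiberMap_zero volume
  · exact (MeasurePreserving.id volume).prod (measurePreserving_add_right volume _)

theorem shift_iterate_apply (x : ℤ → Fin 2) (n : ℕ) (j : ℤ) : (shift^[n] x) j = x (j + n) := by
  induction n generalizing x with
  | zero => simp
  | succ n ih =>
    rw [iterate_succ_apply, ih]
    simp only [shift, Nat.cast_succ, add_comm (n : ℤ) 1, add_assoc]

theorem isPeriodicPt_perWord (k : ℕ) : IsPeriodicPt shift k (perWord k) := by
  funext j
  simp [shift_iterate_apply, perWord]

theorem birkhoffSum_vertDisp_perWord {k : ℕ} (hk : 0 < k) :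
    birkhoffSum shift vertDisp k (perWord k) = √2 := by
  have hterm : ∀ i ∈ Finset.range k,
      vertDisp (shift^[i] (perWord k)) = if i = k - 1 then √2 else 0 := by
    intro i hi
    have hik : (i : ℤ) % k = k - 1 ↔ i = k - 1 := by
      rw [Int.emod_eq_of_lt (by omega) (by simpa using hi)]
      omega
    rw [vertDisp, shift_iterate_apply, zero_add, perWord]
    by_cases h : i = k - 1
    · rw [if_pos (hik.mpr h), if_pos h]; simp
    · rw [if_neg (mt hik.mp h), if_neg h]; simp
  rw [birkhoffSum, Finset.sum_congr rfl hterm, Finset.sum_ite_eq', if_pos (by simp; omega)]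

theorem integral_horDisp_eq_zero {m : Measure ((ℤ → Fin 2) × T2)} [IsFiniteMeasure m]
    (hm : MeasurePreserving 𝐅 m m) {k : ℕ}
    (hper : ∀ᵐ q ∂m, IsPeriodicPt shift k q.1 ∧ birkhoffSum shift vertDisp k q.1 = √2) :
    ∫ q, horDisp q ∂m = 0 := by
  set Ψ : (ℤ → Fin 2) × T2 → ℂ :=
    fun q => if q.1 0 = 0 then (AddCircle.toCircle q.2.2 : ℂ) else 0
  have hΨm : Measurable Ψ := Measurable.ite (measurable_fst measurableSet_symbol_eq_zero)
    (Continuous.measurable (by fun_prop)) measurable_const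
  have hΨ : Ψ ∘ 𝐅^[k] =ᵐ[m] (AddCircle.toCircle ((√2 : ℝ) : AddCircle (1:ℝ)) : ℂ) • Ψ := by
    filter_upwards [hper] with q ⟨hq, hsum⟩
    simp only [comp_apply, Pi.smul_apply, smul_eq_mul, Ψ, coc_iterate_fst, hq.eq,
      coc_iterate_snd_snd fiberMap_snd, hsum, AddCircle.toCircle_add]
    split_ifs <;> simp [mul_comm]
  have hΨint : Integrable Ψ m := Integrable.of_bound hΨm.aestronglyMeasurable 1
    (ae_of_all _ fun q => by by_cases h : q.1 0 = 0 <;> simp [Ψ, h, Circle.norm_coe])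
  calc ∫ q, horDisp q ∂m = (∫ q, Ψ q ∂m).im := by
        rw [← Complex.imCLM_apply, ← Complex.imCLM.integral_comp_comm hΨint]
        congr 1
        funext q
        by_cases h : q.1 0 = 0 <;> simp [horDisp, Ψ, sinCircle, h]
    _ = 0 := by
        rw [(hm.iterate k).integral_eq_zero_of_comp_ae_eq_smul hΨm.aestronglyMeasurable
          toCircle_sqrt_two_ne_one hΨ, Complex.zero_im]

theorem integral_disp (m : Measure ((ℤ → Fin 2) × T2)) [IsFiniteMeasure m] :
    ∫ q, disp q ∂m = (∫ q, horDisp q ∂m, ∫ x, vertDisp x ∂m.map Prod.fst) := by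
  have hhor : Integrable horDisp m := Integrable.of_bound measurable_horDisp.aestronglyMeasurable 1
    (ae_of_all _ abs_horDisp_le_one)
  have hvert : Integrable (fun q : (ℤ → Fin 2) × T2 => vertDisp q.1) m :=
    Integrable.of_bound (measurable_vertDisp.comp measurable_fst).aestronglyMeasurable √2
      (ae_of_all _ fun q => by
        by_cases h : q.1 0 = 0 <;> simp [vertDisp, h, abs_of_nonneg, Real.sqrt_nonneg])
  rw [integral_map measurable_fst.aemeasurable measurable_vertDisp.aestronglyMeasurable]
  exact integral_pair hhor hvert

theorem rhoMuSet_dirac_zero :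
    rhoMuSet 𝐅 disp (Measure.dirac fun _ => 0) = {v | v.1 ∈ Icc (-1 : ℝ) 1 ∧ v.2 = 0} := by
  ext v
  constructor
  · rintro ⟨m, hm, -, hproj, rfl⟩
    rw [integral_disp, hproj, integral_dirac]
    refine ⟨abs_le.mp ?_, by simp [vertDisp]⟩
    simpa using norm_integral_le_of_norm_le_const (μ := m) (f := horDisp)
      (ae_of_all _ abs_horDisp_le_one)
  · rintro ⟨hv1, hv2⟩
    obtain ⟨s, -, hs⟩ := Real.surjOn_sin hv1
    set t : ℝ := s / (2 * π)
    have ht : Real.sin (2 * π * t) = v.1 := by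
      rw [mul_div_cancel₀ _ (by positivity), hs]
    have hshift : MeasurePreserving shift (Measure.dirac fun _ : ℤ => (0 : Fin 2))
        (Measure.dirac fun _ => 0) :=
      ⟨measurable_shift, Measure.map_dirac _⟩
    have hfiber : ∀ᵐ x ∂(Measure.dirac fun _ : ℤ => (0 : Fin 2)),
        (volume.prod (Measure.dirac (t : AddCircle (1:ℝ)))).map (fiberMap (x 0)) =
          volume.prod (Measure.dirac (t : AddCircle (1:ℝ))) := by
      rw [ae_dirac_eq]
      exact (measurePreserving_fiberMap_zero _).map_eq
    refine ⟨_, inferInstance, (hshift.skew_product measurable_fiberMap hfiber).map_eq,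
      by simp, ?_⟩
    rw [integral_disp, Measure.map_fst_prod, measure_univ, one_smul, integral_dirac,
      Measure.dirac_prod, integral_map (by fun_prop) measurable_horDisp.aestronglyMeasurable,
      Measure.prod_dirac, integral_map (f := fun q => horDisp (fun _ => 0, q)) (by fun_prop)
        (measurable_horDisp.comp measurable_prodMk_left).aestronglyMeasurable]
    simp [horDisp, vertDisp, sinCircle_coe, ht, Prod.ext_iff, hv2]

theorem integral_disp_of_map_fst_eq_orbitMeasure {k : ℕ} (hk : 0 < k)
    {m : Measure ((ℤ → Fin 2) × T2)} [IsFiniteMeasure m] (hinv : m.map 𝐅 = m)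
    (hproj : m.map Prod.fst = orbitMeasure shift k (perWord k)) :
    ∫ q, disp q ∂m = (0, √2 / k) := by
  have hper : ∀ᵐ x ∂m.map Prod.fst,
      IsPeriodicPt shift k x ∧ birkhoffSum shift vertDisp k x = √2 := by
    rw [hproj]
    exact ae_orbitMeasure fun i => ⟨(isPeriodicPt_perWord k).apply_iterate i,
      ((isPeriodicPt_perWord k).birkhoffSum_iterate_apply _ i).trans
        (birkhoffSum_vertDisp_perWord hk)⟩
  rw [integral_disp, integral_horDisp_eq_zero ⟨measurable_coc_fiberMap, hinv⟩
    (ae_of_ae_map measurable_fst.aemeasurable hper), hproj, integral_orbitMeasure,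
    birkhoffSum_vertDisp_perWord hk, smul_eq_mul, inv_mul_eq_div]

theorem rhoMuSet_orbitMeasure_perWord {k : ℕ} (hk : 0 < k) :
    rhoMuSet 𝐅 disp (orbitMeasure shift k (perWord k)) = {((0 : ℝ), √2 / k)} := by
  have := isProbabilityMeasure_orbitMeasure (f := shift) (x := perWord k) hk.ne'
  ext v
  constructor
  · rintro ⟨m, hm, hinv, hproj, rfl⟩
    exact integral_disp_of_map_fst_eq_orbitMeasure hk hinv hproj
  · rintro rfl
    have hshift : MeasurePreserving shift (orbitMeasure shift k (perWord k))
        (orbitMeasure shift k (perWord k)) :=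
      ⟨measurable_shift, map_orbitMeasure measurable_shift (isPeriodicPt_perWord k)⟩
    have hinv := (hshift.skew_product measurable_fiberMap
      (ae_of_all _ fun x => (measurePreserving_fiberMap (x 0)).map_eq)).map_eq
    have hproj : ((orbitMeasure shift k (perWord k)).prod (volume : Measure T2)).map Prod.fst =
        orbitMeasure shift k (perWord k) := by simp
    exact ⟨_, inferInstance, hinv, hproj, integral_disp_of_map_fst_eq_orbitMeasure hk hinv hproj⟩

theorem example_rotation_sets_not_continuous_general
    (f : Fin 2 → T2 → T2)
    (hlift : ∀ i p, pr (ftsel i p) = f i (pr p))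
    (ρ1 : (ℤ → Fin 2) × T2 → ℝ × ℝ)
    (hρ : ∀ (x : ℤ → Fin 2) (p : ℝ × ℝ), ρ1 (x, pr p) = ftsel (x 0) p - p) :
    rhoMuSet (coc shift fun x => f (x 0)) ρ1 (Measure.dirac fun _ => 0) =
        {v : ℝ × ℝ | v.1 ∈ Set.Icc (-1 : ℝ) 1 ∧ v.2 = 0} ∧
      ∀ k : ℕ, 0 < k →
        rhoMuSet (coc shift fun x => f (x 0)) ρ1
            ((k : ENNReal)⁻¹ • ∑ i ∈ Finset.range k,
              Measure.dirac (shift^[i] (perWord k))) =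
          {((0 : ℝ), Real.sqrt 2 / k)} := by
  obtain rfl := eq_fiberMap_of_lift hlift
  obtain rfl := eq_disp_of_lift hρ
  exact ⟨rhoMuSet_dirac_zero, fun k hk => rhoMuSet_orbitMeasure_perWord hk⟩

/-- for the locally constant cocycle generated by `f̃₀, f̃₁`, the
rotation set of `δ_{0^∞}` is `[−1,1] × {0}`, while the rotation set of the
uniform measure on the orbit of the `k`-periodic word `0^{k−1}1` is
`{(0, √2/k)}`; hence `μ ↦ ρ_μ(F̃)` is not weak-* continuous. -/
theorem example_rotation_sets_not_continuous
    (f : Fin 2 → T2 → T2) (hf : ∀ i, Continuous (f i))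
    (hlift : ∀ i p, pr (ftsel i p) = f i (pr p))
    (ρ1 : (ℤ → Fin 2) × T2 → ℝ × ℝ) (hρc : Continuous ρ1)
    (hρ : ∀ (x : ℤ → Fin 2) (p : ℝ × ℝ), ρ1 (x, pr p) = ftsel (x 0) p - p) :
    rhoMuSet (coc shift fun x => f (x 0)) ρ1 (Measure.dirac fun _ => 0) =
        {v : ℝ × ℝ | v.1 ∈ Set.Icc (-1 : ℝ) 1 ∧ v.2 = 0} ∧
      ∀ k : ℕ, 0 < k →
        rhoMuSet (coc shift fun x => f (x 0)) ρ1
            ((k : ENNReal)⁻¹ • ∑ i ∈ Finset.range k,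
              Measure.dirac (shift^[i] (perWord k))) =
          {((0 : ℝ), Real.sqrt 2 / k)} :=
  example_rotation_sets_not_continuous_general f hlift ρ1 hρ
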